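/- Let μ ∈ ℝ, t > 0 and define q(x,t) = (1/C(t)) ∫₀^∞ (exp(−x²/(2s))/√(2πs)) · (exp(−(s−μt)²/(2t))/√(2πt)) ds, where C(t) = ∫_{−μ√t}^∞ (e^{−y²/2}/√(2π)) dy. Then for every β ∈ ℝ, ∫_{−∞}^{+∞} e^{iβx} q(x,t) dx = (1/C(t)) ∫_{−μ√t}^∞ (1/√(2π)) exp( −(β²/2)(√t·w + μt) − w²/2 ) dw. -/

import Mathlib

/-!
The density `q(·, t)` is a variance mixture of centred Gaussians: the variance `s` is distributed
on `(0, ∞)` with the (unnormalised) density of `N(μt, t)`. By Fubini and the characteristic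
function of `N(0, s)`, its Fourier transform is `C(t)⁻¹` times the integral of `e^{-β²s/2}`
against that density over `(0, ∞)`; the substitution `s = √t w + μt` turns it into the standard
normal density.
-/

open Real MeasureTheory Complex

/-- Normalizing factor `C(t) = Pr{B₂^μ(t) > 0}`. -/
noncomputable def normFactor (μ t : ℝ) : ℝ :=
  ∫ y in Set.Ioi (-μ * Real.sqrt t), Real.exp (-y ^ 2 / 2) / Real.sqrt (2 * π)

/-- Density of `I^μ(t) = B₁(|B₂^μ(t)|)`, a Brownian motion composed with the absolute
value of an independent Brownian motion with drift `μ`. -/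
noncomputable def iterBMTimeDriftDensity (μ : ℝ) (x t : ℝ) : ℝ :=
  (normFactor μ t)⁻¹ * ∫ s in Set.Ioi (0 : ℝ),
    (Real.exp (-x ^ 2 / (2 * s)) / Real.sqrt (2 * π * s)) *
      (Real.exp (-(s - μ * t) ^ 2 / (2 * t)) / Real.sqrt (2 * π * t))

open ProbabilityTheory NNReal

lemma gaussianPDFReal_toNNReal (m : ℝ) {v : ℝ} (hv : 0 ≤ v) (x : ℝ) :
    gaussianPDFReal m v.toNNReal x = Real.exp (-(x - m) ^ 2 / (2 * v)) / √(2 * π * v) := by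
  rw [gaussianPDFReal, Real.coe_toNNReal _ hv, inv_mul_eq_div]

lemma sqrt_mul_gaussianPDFReal_sqrt_mul_add {v : ℝ≥0} (hv : v ≠ 0) (m w : ℝ) :
    √v * gaussianPDFReal m v (√v * w + m) = gaussianPDFReal 0 1 w := by
  have hv' : (0 : ℝ) < v := by positivity
  simp only [gaussianPDFReal, NNReal.coe_one, mul_one, sub_zero, add_sub_cancel_right, mul_pow,
    Real.sq_sqrt hv'.le, Real.sqrt_mul' _ hv'.le]
  field_simp

lemma integral_cexp_mul_gaussianPDFReal {v : ℝ≥0} (hv : v ≠ 0) (m β : ℝ) :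
    ∫ x : ℝ, cexp (I * β * x) * gaussianPDFReal m v x = cexp (β * m * I - v * β ^ 2 / 2) := by
  rw [← charFun_gaussianReal, charFun_apply_real, integral_gaussianReal_eq_integral_smul hv]
  refine integral_congr_ae (.of_forall fun x => ?_)
  simp only [Complex.real_smul]
  ring_nf

lemma integral_comp_mul_add_Ioi' {E : Type*} [NormedAddCommGroup E] [NormedSpace ℝ E]
    (g : ℝ → E) (a c : ℝ) {b : ℝ} (hb : 0 < b) :
    b • ∫ x in Set.Ioi a, g (b * x + c) = ∫ x in Set.Ioi (b * a + c), g x := by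
  rw [integral_comp_mul_left_Ioi' (fun x => g (x + c)) a hb]
  simpa [Set.preimage_add_const_Ioi] using
    (measurePreserving_add_right volume c).setIntegral_preimage_emb
      (measurableEmbedding_addRight c) g (Set.Ioi (b * a + c))

lemma integral_Ioi_gaussianPDFReal_smul {E : Type*} [NormedAddCommGroup E] [NormedSpace ℝ E]
    (f : ℝ → E) (m a : ℝ) {v : ℝ≥0} (hv : v ≠ 0) :
    ∫ s in Set.Ioi a, gaussianPDFReal m v s • f s
      = ∫ w in Set.Ioi ((a - m) / √v), gaussianPDFReal 0 1 w • f (√v * w + m) := by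
  have hsv : 0 < √(v : ℝ) := Real.sqrt_pos.2 (by positivity)
  conv_lhs => rw [← sub_add_cancel a m, ← mul_div_cancel₀ (a - m) hsv.ne']
  rw [← integral_comp_mul_add_Ioi' _ _ _ hsv, ← integral_smul]
  refine setIntegral_congr_fun measurableSet_Ioi fun w _ => ?_
  rw [smul_smul, sqrt_mul_gaussianPDFReal_sqrt_mul_add hv]

section VarianceMixture

variable {ν : Measure ℝ} [SFinite ν] {g : ℝ → ℝ}

lemma integrable_gaussianPDFReal_mul_prod (hg : Integrable g ν) (hν : ∀ᵐ s ∂ν, 0 < s) :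
    Integrable (fun p : ℝ × ℝ => gaussianPDFReal 0 p.2.toNNReal p.1 * g p.2) (volume.prod ν) := by
  have hmeas : AEStronglyMeasurable
      (fun p : ℝ × ℝ => gaussianPDFReal 0 p.2.toNNReal p.1 * g p.2) (volume.prod ν) :=
    (measurable_uncurry_gaussianPDFReal.comp (measurable_const.prodMk
      (measurable_snd.real_toNNReal.prodMk measurable_fst))).aestronglyMeasurable.mul hg.1.comp_snd
  refine (integrable_prod_iff' hmeas).2 ⟨.of_forall fun s => ?_, hg.norm.congr ?_⟩
  · exact (integrable_gaussianPDFReal 0 s.toNNReal).mul_const (g s)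
  · filter_upwards [hν] with s hs
    simp only [norm_mul, Real.norm_of_nonneg (gaussianPDFReal_nonneg _ _ _)]
    rw [integral_mul_const, integral_gaussianPDFReal_eq_one _ (by simpa using hs), one_mul]

lemma integral_cexp_mul_integral_gaussianPDFReal_mul (hg : Integrable g ν)
    (hν : ∀ᵐ s ∂ν, 0 < s) (β : ℝ) :
    ∫ x : ℝ, cexp (I * β * x) * ((∫ s, gaussianPDFReal 0 s.toNNReal x * g s ∂ν : ℝ) : ℂ)
      = ∫ s, g s • cexp (-(β ^ 2 * s / 2)) ∂ν := by
  have hF : Integrable (fun p : ℝ × ℝ =>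
      cexp (I * β * p.1) * ((gaussianPDFReal 0 p.2.toNNReal p.1 * g p.2 : ℝ) : ℂ))
      (volume.prod ν) := by
    refine (integrable_gaussianPDFReal_mul_prod hg hν).ofReal.bdd_mul (c := 1) ?_
      (.of_forall fun p => ?_)
    · fun_prop
    · simp [Complex.norm_exp]
  simp_rw [← integral_complex_ofReal, ← integral_const_mul]
  rw [integral_integral_swap hF]
  refine integral_congr_ae ?_
  filter_upwards [hν] with s hs
  simp_rw [Complex.ofReal_mul, ← mul_assoc]
  rw [integral_mul_const, integral_cexp_mul_gaussianPDFReal (by simpa using hs)]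
  rw [Real.coe_toNNReal _ hs.le, Complex.ofReal_zero, Complex.real_smul]
  ring_nf

end VarianceMixture

lemma iterBMTimeDriftDensity_eq (μ x : ℝ) {t : ℝ} (ht : 0 ≤ t) :
    iterBMTimeDriftDensity μ x t = (normFactor μ t)⁻¹ *
      ∫ s in Set.Ioi 0, gaussianPDFReal 0 s.toNNReal x * gaussianPDFReal (μ * t) t.toNNReal s := by
  rw [iterBMTimeDriftDensity]
  congr 1
  refine setIntegral_congr_fun measurableSet_Ioi fun s hs => ?_
  rw [gaussianPDFReal_toNNReal _ (le_of_lt hs), gaussianPDFReal_toNNReal _ ht, sub_zero]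

theorem iterBMTimeDriftDensity_fourier (μ t : ℝ) (ht : 0 < t) :
    ∀ β : ℝ,
      (∫ x : ℝ, Complex.exp (Complex.I * β * x) * (iterBMTimeDriftDensity μ x t : ℂ))
        = ((normFactor μ t)⁻¹ : ℂ) *
            ∫ w in Set.Ioi (-μ * Real.sqrt t),
              ((Real.sqrt (2 * π))⁻¹ : ℂ) *
                Complex.exp (-((β : ℂ) ^ 2 / 2) * (Real.sqrt t * w + μ * t) - (w : ℂ) ^ 2 / 2) := by
  intro β
  have hv : t.toNNReal ≠ 0 := by simpa using ht
  calc _ = ((normFactor μ t)⁻¹ : ℂ) * ∫ x : ℝ, cexp (I * β * x) * ((∫ s in Set.Ioi 0,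
          gaussianPDFReal 0 s.toNNReal x * gaussianPDFReal (μ * t) t.toNNReal s : ℝ) : ℂ) := by
        rw [← integral_const_mul]
        refine integral_congr_ae (.of_forall fun x => ?_)
        simp only [iterBMTimeDriftDensity_eq μ x ht.le, Complex.ofReal_mul, Complex.ofReal_inv]
        ring
    _ = ((normFactor μ t)⁻¹ : ℂ) * ∫ s : ℝ in Set.Ioi 0,
          gaussianPDFReal (μ * t) t.toNNReal s • cexp (-(β ^ 2 * s / 2)) := by
        rw [integral_cexp_mul_integral_gaussianPDFReal_mul (ν := volume.restrict (Set.Ioi 0))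
          (integrable_gaussianPDFReal _ _).restrict (ae_restrict_mem measurableSet_Ioi)]
    _ = _ := by
        have h0 : (0 - μ * t) / √t = -μ * √t := by
          rw [zero_sub, neg_div, mul_div_assoc, Real.div_sqrt, neg_mul]
        rw [integral_Ioi_gaussianPDFReal_smul _ _ _ hv, Real.coe_toNNReal _ ht.le, h0]
        congr 1
        refine setIntegral_congr_fun measurableSet_Ioi fun w _ => ?_
        simp only [gaussianPDFReal, NNReal.coe_one, mul_one, sub_zero, Complex.real_smul]
        push_cast
        rw [sub_eq_add_neg, Complex.exp_add]
        ring_nf
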